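/- arXiv:1903.07905 — 10 statements merged into one kernel-verified Lean document; each statement's English description precedes it below -/
import Mathlib

section
/- For all real x, y, z, the point (x, y, z) belongs to the convex hull in ℝ³ of the four points (0,0,0), (1,0,0), (0,1,0), (1,1,1) if and only if 0 ≤ x ≤ 1, 0 ≤ y ≤ 1, and max(x + y − 1, 0) ≤ z ≤ min(x, y). -/
/-!
Writing `(x, y, z) = ∑ wᵢ vᵢ` with `∑ wᵢ = 1` over the four vertices forces the barycentric
coordinates `w = (1 - x - y + z, x - z, y - z, z)`. So the point lies in the tetrahedron exactly
when these four numbers are nonnegative, and these are the Fréchet–Hoeffding bounds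
`max (x + y - 1) 0 ≤ z ≤ min x y`, which in turn force `0 ≤ x, y ≤ 1`.
-/

open Set

theorem convexHull_range_eq_image_stdSimplex {R E ι : Type*} [Field R] [LinearOrder R]
    [IsStrictOrderedRing R] [AddCommGroup E] [Module R E] [Fintype ι] (v : ι → E) :
    convexHull R (range v) = Fintype.linearCombination R v '' stdSimplex R ι := by
  classical
  rw [← convexHull_rangle_single_eq_stdSimplex, LinearMap.image_convexHull, ← range_comp]
  congr with i
  simp [Fintype.linearCombination_apply, Pi.single_apply]

theorem range_tetrahedron {R : Type*} [Zero R] [One R] :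
    range ![![0, 0, 0], ![1, 0, 0], ![0, 1, 0], ![1, 1, 1]] =
      ({![0, 0, 0], ![1, 0, 0], ![0, 1, 0], ![1, 1, 1]} : Set (Fin 3 → R)) := by
  simp only [Matrix.range_cons, Matrix.range_empty, union_empty, singleton_union]

theorem linearCombination_tetrahedron {R : Type*} [Semiring R] (w : Fin 4 → R) :
    Fintype.linearCombination R ![![0, 0, 0], ![1, 0, 0], ![0, 1, 0], ![1, 1, 1]] w =
      ![w 1 + w 3, w 2 + w 3, w 3] := by
  ext i
  fin_cases i <;> simp [Fintype.linearCombination_apply, Fin.sum_univ_four]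

theorem mem_convexHull_tetrahedron_iff {R : Type*} [Field R] [LinearOrder R]
    [IsStrictOrderedRing R] {x y z : R} :
    ![x, y, z] ∈ convexHull R
      ({![0, 0, 0], ![1, 0, 0], ![0, 1, 0], ![1, 1, 1]} : Set (Fin 3 → R)) ↔
      0 ≤ 1 - x - y + z ∧ 0 ≤ x - z ∧ 0 ≤ y - z ∧ 0 ≤ z := by
  rw [← range_tetrahedron, convexHull_range_eq_image_stdSimplex]
  constructor
  · rintro ⟨w, ⟨hw_nonneg, hw_sum⟩, hw⟩
    rw [linearCombination_tetrahedron] at hw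
    rw [Fin.sum_univ_four] at hw_sum
    have hx : w 1 + w 3 = x := congrFun hw 0
    have hy : w 2 + w 3 = y := congrFun hw 1
    have hz : w 3 = z := congrFun hw 2
    refine ⟨?_, ?_, ?_, ?_⟩ <;>
      linarith [hw_nonneg 0, hw_nonneg 1, hw_nonneg 2, hw_nonneg 3]
  · rintro ⟨h₀, h₁, h₂, h₃⟩
    refine ⟨![1 - x - y + z, x - z, y - z, z], ⟨?_, ?_⟩, ?_⟩
    · intro i
      fin_cases i <;> assumption
    · simp only [Fin.sum_univ_four, Matrix.cons_val]
      ring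
    · simp [linearCombination_tetrahedron]

theorem frechet_hoeffding_tetrahedron (x y z : ℝ) :
    (![x, y, z] ∈ convexHull ℝ
      ({![0, 0, 0], ![1, 0, 0], ![0, 1, 0], ![1, 1, 1]} : Set (Fin 3 → ℝ))) ↔
      (0 ≤ x ∧ x ≤ 1 ∧ 0 ≤ y ∧ y ≤ 1 ∧ max (x + y - 1) 0 ≤ z ∧ z ≤ min x y) := by
  rw [mem_convexHull_tetrahedron_iff, max_le_iff, le_min_iff]
  constructor
  · rintro ⟨h₀, h₁, h₂, h₃⟩
    refine ⟨?_, ?_, ?_, ?_, ⟨?_, ?_⟩, ?_, ?_⟩ <;> linarith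
  · rintro ⟨-, -, -, -, ⟨hxy, hz⟩, hzx, hzy⟩
    refine ⟨?_, ?_, ?_, ?_⟩ <;> linarith
end

section
/- Let x, y ∈ [0,1] and z ∈ ℝ. The point (x, y, z) belongs to the convex hull in ℝ³ of the six points Q₁=(1,1,1), Q₂=(0,0,0), Q₃=(x,0,0), Q₄=(0,y,0), Q₅=(x,1,x), Q₆=(1,y,y) if and only if x·y ≤ z ≤ min(x, y). -/
/-!
Every vertex lies below the planes `Z = X` and `Z = Y` and above the plane `Z = x·Y + y·X - x·y`
(for `Q₁` this is `(1 - x)(1 - y) ≥ 0`), so the hull does too, which gives `x·y ≤ z ≤ min x y`.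
Conversely, above `(x, y)` the hull contains the lower point `(x, y, x·y) = y·Q₅ + (1 - y)·Q₃` and
the upper point `(x, y, min x y)`, which for `x ≤ y` lies on the segment from `Q₄` to the diagonal
point `(y, y, y) = y·Q₁ + (1 - y)·Q₂` (symmetrically via `Q₃` for `y ≤ x`); hence it contains the
whole vertical segment between them.
-/

open Set

theorem LinearMap.le_of_mem_convexHull {𝕜 E : Type*} [Field 𝕜] [LinearOrder 𝕜]
    [IsStrictOrderedRing 𝕜] [AddCommGroup E] [Module 𝕜 E] {s : Set E} (f : E →ₗ[𝕜] 𝕜) {c : 𝕜}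
    (hs : ∀ p ∈ s, f p ≤ c) {p : E} (hp : p ∈ convexHull 𝕜 s) : f p ≤ c :=
  convexHull_min hs (convex_halfSpace_le f.isLinear c) hp

theorem Convex.vec3_mem {𝕜 : Type*} [Field 𝕜] [LinearOrder 𝕜] [IsStrictOrderedRing 𝕜]
    {C : Set (Fin 3 → 𝕜)} (hC : Convex 𝕜 C) {p₀ p₁ p₂ q₀ q₁ q₂ r₀ r₁ r₂ a b : 𝕜}
    (hp : ![p₀, p₁, p₂] ∈ C) (hq : ![q₀, q₁, q₂] ∈ C) (ha : 0 ≤ a) (hb : 0 ≤ b)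
    (hab : a + b = 1) (h₀ : a * p₀ + b * q₀ = r₀) (h₁ : a * p₁ + b * q₁ = r₁)
    (h₂ : a * p₂ + b * q₂ = r₂) :
    ![r₀, r₁, r₂] ∈ C := by
  subst h₀ h₁ h₂
  simpa only [Matrix.smul_vec3, Matrix.vec3_add, smul_eq_mul] using hC hp hq ha hb hab

theorem exists_convexCombination_of_mem_Icc {a b t : ℝ} (ht : t ∈ Icc a b) :
    ∃ u v : ℝ, 0 ≤ u ∧ 0 ≤ v ∧ u + v = 1 ∧ u * a + v * b = t := by
  obtain ⟨u, v, hu, hv, huv, rfl⟩ := Icc_subset_segment (𝕜 := ℝ) ht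
  exact ⟨u, v, hu, hv, huv, by simp only [smul_eq_mul]⟩

def conjunctionPoints (x y : ℝ) : Set (Fin 3 → ℝ) :=
  {![1, 1, 1], ![0, 0, 0], ![x, 0, 0], ![0, y, 0], ![x, 1, x], ![1, y, y]}

namespace conjunctionPoints

variable {x y z : ℝ}

theorem supporting_halfspaces (hx : x ∈ Icc (0 : ℝ) 1) (hy : y ∈ Icc (0 : ℝ) 1) :
    ∀ p ∈ conjunctionPoints x y, p 2 ≤ p 0 ∧ p 2 ≤ p 1 ∧ x * p 1 + y * p 0 - p 2 ≤ x * y := by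
  obtain ⟨hx₀, hx₁⟩ := hx
  obtain ⟨hy₀, hy₁⟩ := hy
  have : 0 ≤ (1 - x) * (1 - y) := mul_nonneg (by linarith) (by linarith)
  simp only [conjunctionPoints, mem_insert_iff, mem_singleton_iff, forall_eq_or_imp, forall_eq]
  simp only [Matrix.cons_val_zero, Matrix.cons_val_one, Matrix.cons_val_two, Matrix.head_cons,
    Matrix.tail_cons]
  refine ⟨?_, ?_, ?_, ?_, ?_, ?_⟩ <;> refine ⟨?_, ?_, ?_⟩ <;> nlinarith

theorem bounds_of_mem_convexHull (hx : x ∈ Icc (0 : ℝ) 1) (hy : y ∈ Icc (0 : ℝ) 1)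
    (h : ![x, y, z] ∈ convexHull ℝ (conjunctionPoints x y)) : x * y ≤ z ∧ z ≤ min x y := by
  have hs := supporting_halfspaces hx hy
  let π (i : Fin 3) : (Fin 3 → ℝ) →ₗ[ℝ] ℝ := LinearMap.proj i
  have h₀ : z - x ≤ 0 :=
    (π 2 - π 0).le_of_mem_convexHull (fun p hp ↦ sub_nonpos.2 (hs p hp).1) h
  have h₁ : z - y ≤ 0 :=
    (π 2 - π 1).le_of_mem_convexHull (fun p hp ↦ sub_nonpos.2 (hs p hp).2.1) h
  have h₂ : x * y + y * x - z ≤ x * y :=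
    (x • π 1 + y • π 0 - π 2).le_of_mem_convexHull (fun p hp ↦ (hs p hp).2.2) h
  exact ⟨by linarith, le_min (by linarith) (by linarith)⟩

theorem vertex_mem_convexHull {p : Fin 3 → ℝ}
    (hp : p ∈ conjunctionPoints x y := by simp [conjunctionPoints]) :
    p ∈ convexHull ℝ (conjunctionPoints x y) :=
  subset_convexHull ℝ _ hp

theorem diagonal_mem_convexHull {t : ℝ} (ht : t ∈ Icc (0 : ℝ) 1) :
    ![t, t, t] ∈ convexHull ℝ (conjunctionPoints x y) :=
  (convex_convexHull ℝ _).vec3_mem (vertex_mem_convexHull (p := ![1, 1, 1]))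
    (vertex_mem_convexHull (p := ![0, 0, 0])) ht.1 (sub_nonneg.2 ht.2) (add_sub_cancel t 1)
    (by ring) (by ring) (by ring)

theorem lower_mem_convexHull (hy : y ∈ Icc (0 : ℝ) 1) :
    ![x, y, x * y] ∈ convexHull ℝ (conjunctionPoints x y) :=
  (convex_convexHull ℝ _).vec3_mem (vertex_mem_convexHull (p := ![x, 1, x]))
    (vertex_mem_convexHull (p := ![x, 0, 0])) hy.1 (sub_nonneg.2 hy.2) (add_sub_cancel y 1)
    (by ring) (by ring) (by ring)

theorem upper_mem_convexHull (hx : x ∈ Icc (0 : ℝ) 1) (hy : y ∈ Icc (0 : ℝ) 1) :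
    ![x, y, min x y] ∈ convexHull ℝ (conjunctionPoints x y) := by
  rcases le_total x y with hxy | hyx
  · obtain ⟨u, v, hu, hv, huv, hx'⟩ := exists_convexCombination_of_mem_Icc ⟨hx.1, hxy⟩
    rw [min_eq_left hxy]
    exact (convex_convexHull ℝ _).vec3_mem (vertex_mem_convexHull (p := ![0, y, 0]))
      (diagonal_mem_convexHull hy) hu hv huv hx' (by linear_combination y * huv) hx'
  · obtain ⟨u, v, hu, hv, huv, hy'⟩ := exists_convexCombination_of_mem_Icc ⟨hy.1, hyx⟩
    rw [min_eq_right hyx]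
    exact (convex_convexHull ℝ _).vec3_mem (vertex_mem_convexHull (p := ![x, 0, 0]))
      (diagonal_mem_convexHull hx) hu hv huv (by linear_combination x * huv) hy' hy'

theorem mem_convexHull_of_bounds (hx : x ∈ Icc (0 : ℝ) 1) (hy : y ∈ Icc (0 : ℝ) 1)
    (h : x * y ≤ z ∧ z ≤ min x y) : ![x, y, z] ∈ convexHull ℝ (conjunctionPoints x y) := by
  obtain ⟨u, v, hu, hv, huv, rfl⟩ := exists_convexCombination_of_mem_Icc h
  exact (convex_convexHull ℝ _).vec3_mem (lower_mem_convexHull hy) (upper_mem_convexHull hx hy)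
    hu hv huv (by linear_combination x * huv) (by linear_combination y * huv) rfl

end conjunctionPoints

theorem conjunction_same_consequent_hull (x y z : ℝ)
    (hx : x ∈ Set.Icc (0 : ℝ) 1) (hy : y ∈ Set.Icc (0 : ℝ) 1) :
    (![x, y, z] ∈ convexHull ℝ
      ({![1, 1, 1], ![0, 0, 0], ![x, 0, 0], ![0, y, 0], ![x, 1, x], ![1, y, y]} :
        Set (Fin 3 → ℝ))) ↔ (x * y ≤ z ∧ z ≤ min x y) :=
  ⟨conjunctionPoints.bounds_of_mem_convexHull hx hy,
    conjunctionPoints.mem_convexHull_of_bounds hx hy⟩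
end

section
/- Let x, y ∈ [0,1] and z ∈ ℝ. The point (x, y, z) belongs to the convex hull in ℝ³ of the four points (x,0,0), (0,y,0), (x,1,x), (1,y,y) if and only if z = x·y. -/
theorem conjunction_same_consequent_incompatible_hull (x y z : ℝ)
    (hx : x ∈ Set.Icc (0 : ℝ) 1) (hy : y ∈ Set.Icc (0 : ℝ) 1) :
    (![x, y, z] ∈ convexHull ℝ
      ({![x, 0, 0], ![0, y, 0], ![x, 1, x], ![1, y, y]} : Set (Fin 3 → ℝ))) ↔
      z = x * y := by
  constructor
  · intro h
    have hsub : ({![x, 0, 0], ![0, y, 0], ![x, 1, x], ![1, y, y]} : Set (Fin 3 → ℝ)) ⊆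
        {v | (LinearMap.proj 2 - y • LinearMap.proj 0 - x • LinearMap.proj 1 :
          (Fin 3 → ℝ) →ₗ[ℝ] ℝ) v = -(x * y)} := by
      intro v hv
      rcases hv with rfl | rfl | rfl | rfl <;> simp <;> ring
    have h2 := convexHull_min hsub (convex_hyperplane (LinearMap.isLinear _) _) h
    simp at h2
    linarith
  · intro hz
    have h1 : ![x, 0, 0] ∈ ({![x, 0, 0], ![0, y, 0], ![x, 1, x], ![1, y, y]} : Set (Fin 3 → ℝ)) := by
      left; rfl
    have h3 : ![x, 1, x] ∈ ({![x, 0, 0], ![0, y, 0], ![x, 1, x], ![1, y, y]} : Set (Fin 3 → ℝ)) := by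
      right; right; left; rfl
    have hc := (convex_convexHull ℝ _) (subset_convexHull ℝ _ h1) (subset_convexHull ℝ _ h3)
      (by linarith [hy.2] : (0:ℝ) ≤ 1 - y) hy.1 (by ring)
    convert hc using 1
    funext i
    fin_cases i <;> simp <;> ring_nf
    · linarith [hz]
end

section
/- Fix x, y ∈ [0,1]. The function λ ↦ log_λ(1 + (λ^x − 1)(λ^y − 1)/(λ − 1)) tends to max(x + y − 1, 0) as λ tends to +∞. -/
open Filter Real

theorem frank_tnorm_tendsto_lukasiewicz (x y : ℝ)
    (hx : x ∈ Set.Icc (0 : ℝ) 1) (hy : y ∈ Set.Icc (0 : ℝ) 1) :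
    Filter.Tendsto
      (fun l : ℝ => Real.logb l (1 + (l ^ x - 1) * (l ^ y - 1) / (l - 1)))
      Filter.atTop (nhds (max (x + y - 1) 0)) := by
  obtain ⟨hx0, hx1⟩ := hx
  obtain ⟨hy0, hy1⟩ := hy
  set m : ℝ := max (x + y - 1) 0 with hm
  have hm0 : 0 ≤ m := le_max_right _ _
  have hm1 : x + y - 1 ≤ m := le_max_left _ _
  have hlim : Tendsto (fun l : ℝ => Real.log 4 / Real.log l) atTop (nhds 0) :=
    tendsto_const_nhds.div_atTop Real.tendsto_log_atTop
  have h4 : (0:ℝ) < Real.log 4 := Real.log_pos (by norm_num)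
  -- common facts for l ≥ 2
  have key : ∀ l : ℝ, 2 ≤ l →
      (1 < l ∧ 0 < Real.log l ∧ 1 ≤ l ^ x ∧ 1 ≤ l ^ y ∧
        0 ≤ (l ^ x - 1) * (l ^ y - 1) / (l - 1) ∧
        l ^ x * l ^ y = l ^ (x + y - 1) * l) := by
    intro l hl
    have hl1 : (1:ℝ) < l := by linarith
    have hl0 : (0:ℝ) < l := by linarith
    have hpx : 1 ≤ l ^ x := by
      have := Real.rpow_le_rpow_of_exponent_le hl1.le hx0
      simpa [Real.rpow_zero] using this
    have hpy : 1 ≤ l ^ y := by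
      have := Real.rpow_le_rpow_of_exponent_le hl1.le hy0
      simpa [Real.rpow_zero] using this
    refine ⟨hl1, Real.log_pos hl1, hpx, hpy, ?_, ?_⟩
    · exact div_nonneg (mul_nonneg (by linarith) (by linarith)) (by linarith)
    · rw [← Real.rpow_add hl0, ← Real.rpow_add_one hl0.ne']
      ring_nf
  -- upper bound
  have hupper : ∀ᶠ l in atTop, Real.logb l (1 + (l ^ x - 1) * (l ^ y - 1) / (l - 1))
      ≤ m + Real.log 4 / Real.log l := by
    filter_upwards [eventually_ge_atTop (2:ℝ)] with l hl
    obtain ⟨hl1, hlog, hpx, hpy, hA, hR⟩ := key l hl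
    have hl0 : (0:ℝ) < l := by linarith
    set P := l ^ x
    set Q := l ^ y
    set S := l ^ (x + y - 1) with hS
    have hS0 : 0 < S := Real.rpow_pos_of_pos hl0 _
    have hM : S ≤ l ^ m := Real.rpow_le_rpow_of_exponent_le hl1.le hm1
    have hM1 : 1 ≤ l ^ m := by
      have := Real.rpow_le_rpow_of_exponent_le hl1.le hm0
      simpa [Real.rpow_zero] using this
    set M := l ^ m with hMdef
    have hdiv : (P - 1) * (Q - 1) / (l - 1) ≤ 2 * M := by
      rw [div_le_iff₀ (by linarith)]
      nlinarith [hR, hM, hS0.le, hpx, hpy]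
    have hg : 1 + (P - 1) * (Q - 1) / (l - 1) ≤ 4 * M := by linarith
    have hg1 : (1:ℝ) ≤ 1 + (P - 1) * (Q - 1) / (l - 1) := by linarith
    have hlogg : Real.log (1 + (P - 1) * (Q - 1) / (l - 1)) ≤ Real.log 4 + m * Real.log l := by
      calc Real.log (1 + (P - 1) * (Q - 1) / (l - 1)) ≤ Real.log (4 * M) :=
            Real.log_le_log (by linarith) hg
        _ = Real.log 4 + m * Real.log l := by
            rw [Real.log_mul (by norm_num) (by positivity), hMdef, Real.log_rpow hl0]
    rw [Real.logb, div_le_iff₀ hlog]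
    have heq : (m + Real.log 4 / Real.log l) * Real.log l = m * Real.log l + Real.log 4 := by
      field_simp
    rw [heq]
    linarith
  -- lower bound
  have hlower : ∀ᶠ l in atTop, m - Real.log 4 / Real.log l
      ≤ Real.logb l (1 + (l ^ x - 1) * (l ^ y - 1) / (l - 1)) := by
    rcases le_or_gt (x + y) 1 with hc | hc
    · have hmz : m = 0 := max_eq_right (by linarith)
      filter_upwards [eventually_ge_atTop (2:ℝ)] with l hl
      obtain ⟨hl1, hlog, hpx, hpy, hA, hR⟩ := key l hl
      have hlogg : 0 ≤ Real.log (1 + (l ^ x - 1) * (l ^ y - 1) / (l - 1)) :=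
        Real.log_nonneg (by linarith)
      have : 0 ≤ Real.logb l (1 + (l ^ x - 1) * (l ^ y - 1) / (l - 1)) :=
        div_nonneg hlogg hlog.le
      have : m - Real.log 4 / Real.log l ≤ 0 := by
        rw [hmz]
        simp only [zero_sub, neg_nonpos]
        positivity
      linarith
    · have hxpos : 0 < x := by linarith
      have hypos : 0 < y := by linarith
      have hmm : m = x + y - 1 := max_eq_left (by linarith)
      filter_upwards [eventually_ge_atTop (max 2 (max ((2:ℝ) ^ (1/x)) ((2:ℝ) ^ (1/y))))]
        with l hl
      have hl2 : (2:ℝ) ≤ l := le_trans (le_max_left _ _) hl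
      obtain ⟨hl1, hlog, hpx, hpy, hA, hR⟩ := key l hl2
      have hl0 : (0:ℝ) < l := by linarith
      have hP2 : (2:ℝ) ≤ l ^ x := by
        have h1 : ((2:ℝ) ^ (1/x)) ≤ l := le_trans (le_trans (le_max_left _ _) (le_max_right _ _)) hl
        have h2 : ((2:ℝ) ^ (1/x)) ^ x ≤ l ^ x :=
          Real.rpow_le_rpow (by positivity) h1 hxpos.le
        rwa [← Real.rpow_mul (by norm_num), one_div_mul_cancel hxpos.ne', Real.rpow_one] at h2
      have hQ2 : (2:ℝ) ≤ l ^ y := by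
        have h1 : ((2:ℝ) ^ (1/y)) ≤ l := le_trans (le_trans (le_max_right _ _) (le_max_right _ _)) hl
        have h2 : ((2:ℝ) ^ (1/y)) ^ y ≤ l ^ y :=
          Real.rpow_le_rpow (by positivity) h1 hypos.le
        rwa [← Real.rpow_mul (by norm_num), one_div_mul_cancel hypos.ne', Real.rpow_one] at h2
      set P := l ^ x
      set Q := l ^ y
      set S := l ^ (x + y - 1) with hS
      have hS0 : 0 < S := Real.rpow_pos_of_pos hl0 _
      have hdiv : S / 4 ≤ (P - 1) * (Q - 1) / (l - 1) := by
        rw [div_le_div_iff₀ (by norm_num) (by linarith)]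
        nlinarith [hR, hS0.le, mul_nonneg (sub_nonneg.2 hP2) (sub_nonneg.2 hQ2)]
      have hg : S / 4 ≤ 1 + (P - 1) * (Q - 1) / (l - 1) := by linarith
      have hlogg : (x + y - 1) * Real.log l - Real.log 4
          ≤ Real.log (1 + (P - 1) * (Q - 1) / (l - 1)) := by
        calc (x + y - 1) * Real.log l - Real.log 4 = Real.log (S / 4) := by
              rw [Real.log_div hS0.ne' (by norm_num), hS, Real.log_rpow hl0]
          _ ≤ _ := Real.log_le_log (by positivity) hg
      rw [Real.logb, le_div_iff₀ hlog]
      have heq : (m - Real.log 4 / Real.log l) * Real.log l = m * Real.log l - Real.log 4 := by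
        field_simp
      rw [heq, hmm]
      linarith
  have h1 : Tendsto (fun l : ℝ => m - Real.log 4 / Real.log l) atTop (nhds m) := by
    simpa using tendsto_const_nhds.sub hlim
  have h2 : Tendsto (fun l : ℝ => m + Real.log 4 / Real.log l) atTop (nhds m) := by
    simpa using tendsto_const_nhds.add hlim
  exact tendsto_of_tendsto_of_tendsto_of_le_of_le' h1 h2 hlower hupper
end

section
/- Fix x, y ∈ [0,1]. The function λ ↦ log_λ(1 + (λ^x − 1)(λ^y − 1)/(λ − 1)) tends to min(x, y) as λ tends to 0 from the right. -/
open Filter Real Set Topology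

private lemma rpow_tendsto_zero_right (e : ℝ) (he : 0 < e) :
    Tendsto (fun l : ℝ => l ^ e) (𝓝[>] (0:ℝ)) (𝓝 0) := by
  have h1 : Tendsto (fun l : ℝ => Real.exp (Real.log l * e)) (𝓝[>] (0:ℝ)) (𝓝 0) := by
    refine Real.tendsto_exp_atBot.comp ?_
    exact (Real.tendsto_log_nhdsGT_zero).atBot_mul_const he
  refine h1.congr' ?_
  filter_upwards [self_mem_nhdsWithin] with l (hl : 0 < l)
  rw [Real.rpow_def_of_pos hl]

private lemma rpow_tendsto (e : ℝ) (he : 0 ≤ e) :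
    Tendsto (fun l : ℝ => l ^ e) (𝓝[>] (0:ℝ)) (𝓝 (if e = 0 then 1 else 0)) := by
  rcases he.eq_or_lt with h | h
  · simp only [← h, Real.rpow_zero, if_pos rfl]
    exact tendsto_const_nhds
  · rw [if_neg h.ne']
    exact rpow_tendsto_zero_right e h

private lemma frank_key (x y : ℝ) (hx : 0 < x) (hxy : x ≤ y) (hy : y ≤ 1) :
    Tendsto (fun l : ℝ => Real.logb l (1 + (l ^ x - 1) * (l ^ y - 1) / (l - 1)))
      (𝓝[>] (0:ℝ)) (𝓝 x) := by
  set g : ℝ → ℝ := fun l => 1 + l ^ (y - x) - l ^ (1 - x) - l ^ y with hg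
  -- limit of g
  set c : ℝ := 1 + (if y - x = 0 then (1:ℝ) else 0) - (if 1 - x = 0 then (1:ℝ) else 0) with hc
  have hgc : Tendsto g (𝓝[>] (0:ℝ)) (𝓝 c) := by
    have h1 := rpow_tendsto (y - x) (by linarith)
    have h2 := rpow_tendsto (1 - x) (by linarith)
    have h3 := rpow_tendsto_zero_right y (by linarith)
    simpa using ((tendsto_const_nhds.add h1).sub h2).sub h3
  have hcpos : 0 < c := by
    rw [hc]
    split_ifs with h1 h2 h3
    · norm_num
    · norm_num
    · exfalso; apply h1; linarith [sub_eq_zero.mp h3 ▸ hy]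
    · norm_num
  -- eventual equality
  have heq : (fun l : ℝ => Real.logb l (1 + (l ^ x - 1) * (l ^ y - 1) / (l - 1)))
      =ᶠ[𝓝[>] (0:ℝ)]
      (fun l : ℝ => x + (Real.log (g l) - Real.log (1 - l)) / Real.log l) := by
    filter_upwards [self_mem_nhdsWithin, Ioo_mem_nhdsGT_of_mem (by norm_num : (0:ℝ) ∈ Ico 0 1)]
      with l hl0 hl1
    have hl0 : (0:ℝ) < l := hl0
    have hl1 : l < 1 := hl1.2
    have hgpos : 0 < g l := by
      have e1 : (0:ℝ) ≤ 1 - l ^ (1 - x) := by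
        have := Real.rpow_le_one hl0.le hl1.le (by linarith : (0:ℝ) ≤ 1 - x)
        linarith
      have e2 : 0 < l ^ (y - x) * (1 - l ^ x) := by
        apply mul_pos (Real.rpow_pos_of_pos hl0 _)
        have := Real.rpow_lt_one hl0.le hl1 hx
        linarith
      have : g l = (1 - l ^ (1 - x)) + l ^ (y - x) * (1 - l ^ x) := by
        rw [hg]
        have r1 : l ^ (y - x) * l ^ x = l ^ y := by
          rw [← Real.rpow_add hl0]; ring_nf
        have r2 : l ^ (1 - x) * l ^ x = l := by
          rw [← Real.rpow_add hl0]; norm_num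
        ring_nf
        nlinarith [r1]
      rw [this]; linarith
    have hxpos : 0 < l ^ x := Real.rpow_pos_of_pos hl0 _
    have harg : 1 + (l ^ x - 1) * (l ^ y - 1) / (l - 1) = l ^ x * g l / (1 - l) := by
      have hne : l - 1 ≠ 0 := by linarith
      have hne' : (1:ℝ) - l ≠ 0 := by linarith
      rw [hg]
      have r1 : l ^ x * l ^ (y - x) = l ^ y := by
        rw [← Real.rpow_add hl0]; ring_nf
      have r2 : l ^ x * l ^ (1 - x) = l := by
        rw [← Real.rpow_add hl0]; norm_num
      field_simp
      nlinarith [r1, r2]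
    rw [harg, Real.logb, Real.log_div (by positivity) (by linarith),
      Real.log_mul hxpos.ne' hgpos.ne', Real.log_rpow hl0]
    have hlogne : Real.log l ≠ 0 := by
      have := Real.log_neg hl0 hl1
      linarith
    field_simp
    ring
  rw [Filter.tendsto_congr' heq]
  have hnum : Tendsto (fun l : ℝ => Real.log (g l) - Real.log (1 - l)) (𝓝[>] (0:ℝ))
      (𝓝 (Real.log c - Real.log 1)) := by
    refine Tendsto.sub ?_ ?_
    · exact (Real.continuousAt_log hcpos.ne').tendsto.comp hgc
    · refine (Real.continuousAt_log (by norm_num)).tendsto.comp ?_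
      have : Tendsto (fun l : ℝ => 1 - l) (𝓝[>] (0:ℝ)) (𝓝 (1 - 0)) :=
        (tendsto_const_nhds.sub Filter.tendsto_id).mono_left nhdsWithin_le_nhds
      simpa using this
  have hden : Tendsto (fun l : ℝ => -Real.log l) (𝓝[>] (0:ℝ)) atTop :=
    tendsto_neg_atBot_atTop.comp Real.tendsto_log_nhdsGT_zero
  have h0 : Tendsto (fun l : ℝ => (Real.log (g l) - Real.log (1 - l)) / Real.log l)
      (𝓝[>] (0:ℝ)) (𝓝 0) := by
    have := (hnum.div_atTop hden).neg
    simp only [neg_zero] at this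
    refine this.congr fun l => ?_
    rw [div_neg, neg_neg]
  have : Tendsto (fun l : ℝ => x + (Real.log (g l) - Real.log (1 - l)) / Real.log l)
      (𝓝[>] (0:ℝ)) (𝓝 (x + 0)) := tendsto_const_nhds.add h0
  simpa using this

theorem frank_tnorm_tendsto_min (x y : ℝ)
    (hx : x ∈ Set.Icc (0 : ℝ) 1) (hy : y ∈ Set.Icc (0 : ℝ) 1) :
    Filter.Tendsto
      (fun l : ℝ => Real.logb l (1 + (l ^ x - 1) * (l ^ y - 1) / (l - 1)))
      (nhdsWithin 0 (Set.Ioi 0)) (nhds (min x y)) := by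
  have main : ∀ a b : ℝ, 0 ≤ a → a ≤ b → b ≤ 1 →
      Tendsto (fun l : ℝ => Real.logb l (1 + (l ^ a - 1) * (l ^ b - 1) / (l - 1)))
        (𝓝[>] (0:ℝ)) (𝓝 a) := by
    intro a b ha hab hb
    rcases ha.eq_or_lt with h | h
    · subst h
      simp only [Real.rpow_zero, sub_self, zero_mul, zero_div, add_zero, Real.logb_one]
      exact tendsto_const_nhds
    · exact frank_key a b h hab hb
  rcases le_total x y with h | h
  · rw [min_eq_left h]
    exact main x y hx.1 h hy.2
  · rw [min_eq_right h]
    have := main y x hy.1 h hx.2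
    refine this.congr fun l => ?_
    rw [mul_comm]
end

section
/- Let x, y ∈ [0,1] and let z be a real number with max(x + y − 1, 0) ≤ z ≤ min(x, y). Then z = min(x, y), or z = max(x + y − 1, 0), or z = x·y, or there exists λ ∈ (0,∞) with λ ≠ 1 such that z = log_λ(1 + (λ^x − 1)(λ^y − 1)/(λ − 1)). -/
/-!
For `0 < c ≠ 1`, `frankTNorm c x y = z` as soon as `(c^x - 1)(c^y - 1) = (c^z - 1)(c - 1)`, so it
suffices to find a zero of the residual `R(c)` of this equation. To second order at `c = 1`,
`R(c) ≈ (xy - z)(c - 1)^2`. If `z < xy`, then `R > 0` just right of `1`, while `z > x + y - 1` makes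
`-c^(z+1)` the dominant term at infinity. If `z > xy`, then `R < 0` just left of `1`, while
`z < min x y` makes `c^z` the dominant term near `0`. The intermediate value theorem gives a zero in
`(1, ∞)`, resp. `(0, 1)`.
-/

open Real Filter Set Topology

noncomputable def frankTNorm (l x y : ℝ) : ℝ :=
  logb l (1 + (l ^ x - 1) * (l ^ y - 1) / (l - 1))

noncomputable def frankResidual (x y z l : ℝ) : ℝ :=
  (l ^ x - 1) * (l ^ y - 1) - (l ^ z - 1) * (l - 1)

theorem frankTNorm_eq_of_frankResidual_eq_zero {c x y z : ℝ} (hc : 0 < c) (hc1 : c ≠ 1)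
    (h : frankResidual x y z c = 0) : frankTNorm c x y = z := by
  rw [frankTNorm, sub_eq_zero.mp h, mul_div_cancel_right₀ _ (sub_ne_zero.mpr hc1),
    add_sub_cancel, logb_rpow hc hc1]

theorem continuousOn_frankResidual (x y z : ℝ) : ContinuousOn (frankResidual x y z) (Ioi 0) := by
  have hpow : ∀ a : ℝ, ContinuousOn (fun l : ℝ => l ^ a - 1) (Ioi 0) := fun a =>
    (continuousOn_id.rpow_const fun _ hl => Or.inl (mem_Ioi.mp hl).ne').sub continuousOn_const
  exact ((hpow x).mul (hpow y)).sub ((hpow z).mul (continuousOn_id.sub continuousOn_const))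

theorem tendsto_rpow_sub_one_div_sub_one (p : ℝ) :
    Tendsto (fun l : ℝ => (l ^ p - 1) / (l - 1)) (𝓝[≠] 1) (𝓝 p) := by
  simpa [slope_fun_def_field] using
    (hasDerivAt_rpow_const (x := 1) (p := p) (Or.inl one_ne_zero)).tendsto_slope

theorem tendsto_frankResidual_div_sq (x y z : ℝ) :
    Tendsto (fun l : ℝ => frankResidual x y z l / (l - 1) ^ 2) (𝓝[≠] 1) (𝓝 (x * y - z)) := by
  refine (((tendsto_rpow_sub_one_div_sub_one x).mul (tendsto_rpow_sub_one_div_sub_one y)).sub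
    (tendsto_rpow_sub_one_div_sub_one z)).congr' ?_
  filter_upwards [self_mem_nhdsWithin] with l hl
  have : l - 1 ≠ 0 := sub_ne_zero.mpr hl
  simp only [frankResidual]
  field_simp

theorem eventually_frankResidual_pos_nhdsNE_one {x y z : ℝ} (h : z < x * y) :
    ∀ᶠ l in 𝓝[≠] 1, 0 < frankResidual x y z l := by
  filter_upwards [(tendsto_frankResidual_div_sq x y z).eventually
    (eventually_gt_nhds (sub_pos.mpr h)), self_mem_nhdsWithin] with l hq hl
  exact (div_pos_iff_of_pos_right (by positivity [sub_ne_zero.mpr hl])).mp hq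

theorem eventually_frankResidual_neg_nhdsNE_one {x y z : ℝ} (h : x * y < z) :
    ∀ᶠ l in 𝓝[≠] 1, frankResidual x y z l < 0 := by
  filter_upwards [(tendsto_frankResidual_div_sq x y z).eventually
    (eventually_lt_nhds (sub_neg.mpr h))] with l hq
  exact neg_of_div_neg_left hq (sq_nonneg _)

theorem eventually_frankResidual_pos_nhdsGT_zero {x y z : ℝ} (hz : 0 ≤ z) (hzx : z < x)
    (hzy : z < y) : ∀ᶠ l in 𝓝[>] 0, 0 < frankResidual x y z l := by
  have hdecay : ∀ a > z, Tendsto (fun l : ℝ => l ^ (a - z)) (𝓝[>] 0) (𝓝 0) := fun a ha => by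
    simpa [zero_rpow (sub_pos.mpr ha).ne'] using
      ((continuous_rpow_const (sub_pos.mpr ha).le).tendsto 0).mono_left nhdsWithin_le_nhds
  have hsmall := ((hdecay x hzx).add (hdecay y hzy)).eventually
    (eventually_lt_nhds (by norm_num : (0 : ℝ) + 0 < 1))
  filter_upwards [hsmall, Ioo_mem_nhdsGT one_pos] with l hl ⟨hl0, hl1⟩
  have hdom : l ^ x + l ^ y < l ^ z := by
    have e : ∀ a, l ^ (a - z) * l ^ z = l ^ a := fun a => by rw [← rpow_add hl0, sub_add_cancel]
    simpa only [one_mul, add_mul, e] using mul_lt_mul_of_pos_right hl (rpow_pos_of_pos hl0 z)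
  rw [frankResidual, sub_pos]
  nlinarith [mul_pos (rpow_pos_of_pos hl0 x) (rpow_pos_of_pos hl0 y), rpow_le_one hl0.le hl1.le hz]

theorem eventually_frankResidual_neg_atTop {x y z : ℝ} (hx : 0 ≤ x) (hy : 0 ≤ y) (hz : 0 < z)
    (hxyz : x + y < z + 1) : ∀ᶠ l in atTop, frankResidual x y z l < 0 := by
  have hdecay : ∀ a < z + 1, Tendsto (fun l : ℝ => l ^ (a - (z + 1))) atTop (𝓝 0) :=
    fun a ha => by simpa only [neg_sub] using tendsto_rpow_neg_atTop (sub_pos.mpr ha)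
  have hsmall := (((hdecay _ hxyz).add (hdecay z (by linarith))).add
    (hdecay 1 (by linarith))).eventually (eventually_lt_nhds (by norm_num : (0 : ℝ) + 0 + 0 < 1))
  filter_upwards [hsmall, eventually_ge_atTop 1] with l hl hl1
  have hl0 : 0 < l := one_pos.trans_le hl1
  have hdom : l ^ (x + y) + l ^ z + l ^ (1 : ℝ) < l ^ (z + 1) := by
    have e : ∀ a, l ^ (a - (z + 1)) * l ^ (z + 1) = l ^ a := fun a => by
      rw [← rpow_add hl0, sub_add_cancel]
    simpa only [one_mul, add_mul, e] using mul_lt_mul_of_pos_right hl (rpow_pos_of_pos hl0 (z + 1))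
  rw [rpow_add hl0, rpow_add hl0, rpow_one] at hdom
  rw [frankResidual, sub_neg]
  nlinarith [one_le_rpow hl1 hx, one_le_rpow hl1 hy]

theorem exists_frankResidual_eq_zero_of_lt_mul {x y z : ℝ} (hx : 0 ≤ x) (hy : 0 ≤ y) (hz : 0 < z)
    (hxyz : x + y < z + 1) (hzxy : z < x * y) : ∃ c ∈ Ioi (1 : ℝ), frankResidual x y z c = 0 :=
  isPreconnected_Ioi.intermediate_value₂_eventually₂
    (le_principal_iff.mpr (Ioi_mem_atTop 1)) (le_principal_iff.mpr self_mem_nhdsWithin)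
    ((continuousOn_frankResidual x y z).mono (Ioi_subset_Ioi zero_le_one)) continuousOn_const
    ((eventually_frankResidual_neg_atTop hx hy hz hxyz).mono fun _ => le_of_lt)
    (((eventually_frankResidual_pos_nhdsNE_one hzxy).filter_mono
      (nhdsGT_le_nhdsNE 1)).mono fun _ => le_of_lt)

theorem exists_frankResidual_eq_zero_of_mul_lt {x y z : ℝ} (hz : 0 ≤ z) (hzx : z < x) (hzy : z < y)
    (hxyz : x * y < z) : ∃ c ∈ Ioo (0 : ℝ) 1, frankResidual x y z c = 0 :=
  isPreconnected_Ioo.intermediate_value₂_eventually₂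
    (le_principal_iff.mpr (Ioo_mem_nhdsLT one_pos)) (le_principal_iff.mpr (Ioo_mem_nhdsGT one_pos))
    ((continuousOn_frankResidual x y z).mono Ioo_subset_Ioi_self) continuousOn_const
    (((eventually_frankResidual_neg_nhdsNE_one hxyz).filter_mono
      (nhdsLT_le_nhdsNE 1)).mono fun _ => le_of_lt)
    ((eventually_frankResidual_pos_nhdsGT_zero hz hzx hzy).mono fun _ => le_of_lt)

theorem coherent_extension_is_frank_tnorm (x y z : ℝ)
    (hx : x ∈ Set.Icc (0 : ℝ) 1) (hy : y ∈ Set.Icc (0 : ℝ) 1)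
    (hz1 : max (x + y - 1) 0 ≤ z) (hz2 : z ≤ min x y) :
    z = min x y ∨ z = max (x + y - 1) 0 ∨ z = x * y ∨
      ∃ l : ℝ, 0 < l ∧ l ≠ 1 ∧
        z = Real.logb l (1 + (l ^ x - 1) * (l ^ y - 1) / (l - 1)) := by
  rcases hz2.eq_or_lt with hmin | hmin
  · exact Or.inl hmin
  rcases hz1.eq_or_lt with hmax | hmax
  · exact Or.inr (Or.inl hmax.symm)
  rw [lt_min_iff] at hmin
  rw [max_lt_iff, sub_lt_iff_lt_add] at hmax
  refine Or.inr (Or.inr ?_)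
  rcases lt_trichotomy z (x * y) with hxyz | hxyz | hxyz
  · obtain ⟨c, hc, hroot⟩ := exists_frankResidual_eq_zero_of_lt_mul hx.1 hy.1 hmax.2 hmax.1 hxyz
    have hc0 : 0 < c := one_pos.trans hc
    exact Or.inr ⟨c, hc0, hc.ne', (frankTNorm_eq_of_frankResidual_eq_zero hc0 hc.ne' hroot).symm⟩
  · exact Or.inl hxyz
  · obtain ⟨c, ⟨hc0, hc1⟩, hroot⟩ :=
      exists_frankResidual_eq_zero_of_mul_lt hmax.2.le hmin.1 hmin.2 hxyz
    exact Or.inr ⟨c, hc0, hc1.ne, (frankTNorm_eq_of_frankResidual_eq_zero hc0 hc1.ne hroot).symm⟩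
end

section
/- Let x, y ∈ [0,1] and let z be a real number with x·y ≤ z ≤ min(x, y). Then z = min(x, y), or z = x·y, or there exists λ ∈ (0,1) such that z = log_λ(1 + (λ^x − 1)(λ^y − 1)/(λ − 1)). -/
/-!
For `l ∈ (0, 1)`, the Frank t-norm takes the value `z` at `(x, y)` exactly when
`G l := (l ^ x - 1) * (l ^ y - 1) - (l - 1) * (l ^ z - 1)` (`frankGap x y z l`) vanishes. In the strict case
`x * y < z < min x y`, `G` is positive near `0`, because there
`G l = l ^ z * (1 - l ^ (x - z) - l ^ (y - z)) + l * (1 - l ^ z) + l ^ x * l ^ y`, and negative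
near `1`, because `G l / (l - 1) ^ 2 → x * y - z` (the difference quotients of `l ↦ l ^ p`
at `1` tend to `p`). The intermediate value theorem gives a zero of `G` in `(0, 1)`.
-/

open Filter Topology Set

noncomputable def frankGap (x y z l : ℝ) : ℝ :=
  (l ^ x - 1) * (l ^ y - 1) - (l - 1) * (l ^ z - 1)

section
variable {x y z : ℝ}

theorem logb_frank_eq_of_frankGap_eq_zero {l : ℝ} (hl0 : 0 < l) (hl1 : l ≠ 1)
    (h : frankGap x y z l = 0) :
    Real.logb l (1 + (l ^ x - 1) * (l ^ y - 1) / (l - 1)) = z := by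
  have hsub : l - 1 ≠ 0 := sub_ne_zero.2 hl1
  have harg : 1 + (l ^ x - 1) * (l ^ y - 1) / (l - 1) = l ^ z := by
    rw [frankGap, sub_eq_zero] at h
    rw [h, mul_div_cancel_left₀ _ hsub]
    ring
  rw [harg, Real.logb_rpow hl0 hl1]

theorem continuous_frankGap (hx : 0 ≤ x) (hy : 0 ≤ y) (hz : 0 ≤ z) :
    Continuous (frankGap x y z) := by
  unfold frankGap
  have := Real.continuous_rpow_const hx
  have := Real.continuous_rpow_const hy
  have := Real.continuous_rpow_const hz
  fun_prop

theorem eventually_frankGap_pos (hz : 0 ≤ z) (hzx : z < x) (hzy : z < y) :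
    ∀ᶠ l in 𝓝[>] 0, 0 < frankGap x y z l := by
  have hlim : Tendsto (fun l : ℝ => l ^ (x - z) + l ^ (y - z)) (𝓝[>] 0) (𝓝 0) := by
    have hcont : Continuous fun l : ℝ => l ^ (x - z) + l ^ (y - z) :=
      (Real.continuous_rpow_const (sub_nonneg.2 hzx.le)).add
        (Real.continuous_rpow_const (sub_nonneg.2 hzy.le))
    simpa [Real.zero_rpow (sub_ne_zero.2 hzx.ne'), Real.zero_rpow (sub_ne_zero.2 hzy.ne')]
      using (hcont.tendsto 0).mono_left nhdsWithin_le_nhds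
  filter_upwards [hlim.eventually (gt_mem_nhds one_pos), Ioo_mem_nhdsGT one_pos]
    with l hsmall ⟨hl0, hl1⟩
  have hx : l ^ x = l ^ z * l ^ (x - z) := by rw [← Real.rpow_add hl0]; ring_nf
  have hy : l ^ y = l ^ z * l ^ (y - z) := by rw [← Real.rpow_add hl0]; ring_nf
  have hlz : 0 < l ^ z := Real.rpow_pos_of_pos hl0 z
  have hlz1 : l ^ z ≤ 1 := Real.rpow_le_one hl0.le hl1.le hz
  have hxy : 0 < l ^ x * l ^ y := by positivity
  calc 0 < l ^ z * (1 - (l ^ (x - z) + l ^ (y - z))) + l * (1 - l ^ z) + l ^ x * l ^ y := by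
        have := mul_pos hlz (sub_pos.2 hsmall)
        nlinarith
    _ = frankGap x y z l := by rw [frankGap, hx, hy]; ring

theorem eventually_frankGap_neg (hxyz : x * y < z) :
    ∀ᶠ l in 𝓝[≠] 1, frankGap x y z l < 0 := by
  have hslope (p : ℝ) : Tendsto (fun l : ℝ => (l ^ p - 1) / (l - 1)) (𝓝[≠] 1) (𝓝 p) := by
    have h := Real.hasDerivAt_rpow_const (x := 1) (p := p) (Or.inl one_ne_zero)
    rw [hasDerivAt_iff_tendsto_slope] at h
    simpa [slope_fun_def_field] using h
  have hlim := ((hslope x).mul (hslope y)).sub (hslope z)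
  filter_upwards [hlim.eventually (gt_mem_nhds (sub_neg.2 hxyz)), self_mem_nhdsWithin]
    with l hl hl1
  have hsub : l - 1 ≠ 0 := sub_ne_zero.2 hl1
  have hfactor : frankGap x y z l = (l - 1) ^ 2 * ((l ^ x - 1) / (l - 1) * ((l ^ y - 1) / (l - 1))
      - (l ^ z - 1) / (l - 1)) := by
    rw [frankGap]; field_simp
  rw [hfactor]
  exact mul_neg_of_pos_of_neg (by positivity) hl

theorem exists_frankGap_eq_zero (hz : 0 ≤ z) (hzx : z < x) (hzy : z < y) (hxyz : x * y < z) :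
    ∃ l ∈ Ioo (0 : ℝ) 1, frankGap x y z l = 0 := by
  obtain ⟨a, hGa, ha0, ha1⟩ :=
    ((eventually_frankGap_pos hz hzx hzy).and (Ioo_mem_nhdsGT one_pos)).exists
  obtain ⟨b, hGb, hab, hb1⟩ :=
    ((eventually_frankGap_neg hxyz).filter_mono (nhdsLT_le_nhdsNE 1)).and
      (Ioo_mem_nhdsLT ha1) |>.exists
  obtain ⟨l, hl, hGl⟩ := intermediate_value_Icc' hab.le
    (continuous_frankGap (hz.trans hzx.le) (hz.trans hzy.le) hz).continuousOn ⟨hGb.le, hGa.le⟩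
  exact ⟨l, ⟨ha0.trans_le hl.1, hl.2.trans_lt hb1⟩, hGl⟩

end

theorem coherent_extension_same_consequent_is_frank_tnorm (x y z : ℝ)
    (hx : x ∈ Set.Icc (0 : ℝ) 1) (hy : y ∈ Set.Icc (0 : ℝ) 1)
    (hz1 : x * y ≤ z) (hz2 : z ≤ min x y) :
    z = min x y ∨ z = x * y ∨
      ∃ l ∈ Set.Ioo (0 : ℝ) 1,
        z = Real.logb l (1 + (l ^ x - 1) * (l ^ y - 1) / (l - 1)) := by
  rcases hz2.eq_or_lt with hmin | hmin
  · exact Or.inl hmin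
  rcases hz1.eq_or_lt with hprod | hprod
  · exact Or.inr (Or.inl hprod.symm)
  obtain ⟨l, hl, hGl⟩ := exists_frankGap_eq_zero ((mul_nonneg hx.1 hy.1).trans hz1)
    (lt_min_iff.1 hmin).1 (lt_min_iff.1 hmin).2 hprod
  exact Or.inr (Or.inr ⟨l, hl, (logb_frank_eq_of_frankGap_eq_zero hl.1 hl.2.ne hGl).symm⟩)
end

section
/- Let λ ∈ (0,∞) with λ ≠ 1, let x, y ∈ [0,1], and let a, h, b, k ∈ {0, 1} (as real numbers). Writing F(u,v) = log_λ(1 + (λ^u − 1)(λ^v − 1)/(λ − 1)), it holds that F(a·h + x·(1 − h), b·k + y·(1 − k)) = a·h·b·k + x·(1 − h)·b·k + y·a·h·(1 − k) + F(x, y)·(1 − h)·(1 − k). -/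
theorem frank_tnorm_conjunction_pointwise (l x y a h b k : ℝ)
    (hl : 0 < l) (hl1 : l ≠ 1)
    (hx : x ∈ Set.Icc (0 : ℝ) 1) (hy : y ∈ Set.Icc (0 : ℝ) 1)
    (ha : a = 0 ∨ a = 1) (hh : h = 0 ∨ h = 1)
    (hb : b = 0 ∨ b = 1) (hk : k = 0 ∨ k = 1) :
    Real.logb l
        (1 + (l ^ (a * h + x * (1 - h)) - 1) * (l ^ (b * k + y * (1 - k)) - 1) / (l - 1)) =
      a * h * b * k + x * (1 - h) * b * k + y * a * h * (1 - k) +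
        Real.logb l (1 + (l ^ x - 1) * (l ^ y - 1) / (l - 1)) * (1 - h) * (1 - k) := by
  have hne : l - 1 ≠ 0 := sub_ne_zero.mpr hl1
  have key : ∀ u : ℝ, Real.logb l (1 + (l - 1) * (l ^ u - 1) / (l - 1)) = u := by
    intro u
    rw [mul_comm, mul_div_assoc, div_self hne, mul_one, add_sub_cancel,
      Real.logb_rpow hl hl1]
  have key' : ∀ u : ℝ, Real.logb l (1 + (l ^ u - 1) * (l - 1) / (l - 1)) = u := by
    intro u
    rw [mul_div_assoc, div_self hne, mul_one, add_sub_cancel, Real.logb_rpow hl hl1]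
  have hself : Real.logb l l = 1 := by
    simpa using (Real.logb_rpow hl hl1 : Real.logb l (l ^ (1:ℝ)) = 1)
  rcases ha with rfl | rfl <;> rcases hh with rfl | rfl <;>
    rcases hb with rfl | rfl <;> rcases hk with rfl | rfl <;>
    simp [Real.rpow_zero, Real.rpow_one, key, key', hself, Real.logb_rpow hl hl1]
end

section
/- Let x₁, x₂, x₃ ∈ [0,1] with x₁ + x₂ > 1, x₁ + x₃ > 1, x₂ + x₃ > 1, and set x₁₂ = x₁ + x₂ − 1, x₁₃ = x₁ + x₃ − 1, x₂₃ = x₂ + x₃ − 1. Then 1 − x₁ − x₂ − x₃ + x₁₂ + x₁₃ + x₂₃ ≥ 0 if and only if x₁ + x₂ + x₃ ≥ 2; moreover, if x₁ + x₂ + x₃ ≥ 2, then max(0, x₁₂ + x₁₃ − x₁, x₁₂ + x₂₃ − x₂, x₁₃ + x₂₃ − x₃) = x₁ + x₂ + x₃ − 2 = min(x₁₂, x₁₃, x₂₃, 1 − x₁ − x₂ − x₃ + x₁₂ + x₁₃ + x₂₃). -/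
theorem lukasiewicz_tnorm_assessment_coherent_iff (x₁ x₂ x₃ : ℝ)
    (h1 : x₁ ∈ Set.Icc (0 : ℝ) 1) (h2 : x₂ ∈ Set.Icc (0 : ℝ) 1)
    (h3 : x₃ ∈ Set.Icc (0 : ℝ) 1)
    (h12pos : x₁ + x₂ > 1) (h13pos : x₁ + x₃ > 1) (h23pos : x₂ + x₃ > 1)
    (x₁₂ x₁₃ x₂₃ : ℝ)
    (h12 : x₁₂ = x₁ + x₂ - 1) (h13 : x₁₃ = x₁ + x₃ - 1) (h23 : x₂₃ = x₂ + x₃ - 1) :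
    (1 - x₁ - x₂ - x₃ + x₁₂ + x₁₃ + x₂₃ ≥ 0 ↔ x₁ + x₂ + x₃ ≥ 2) ∧
    (x₁ + x₂ + x₃ ≥ 2 →
      max 0 (max (x₁₂ + x₁₃ - x₁) (max (x₁₂ + x₂₃ - x₂) (x₁₃ + x₂₃ - x₃))) =
          x₁ + x₂ + x₃ - 2 ∧
        min x₁₂ (min x₁₃ (min x₂₃ (1 - x₁ - x₂ - x₃ + x₁₂ + x₁₃ + x₂₃))) =
          x₁ + x₂ + x₃ - 2) := by
  obtain ⟨a1,b1⟩:=h1; obtain ⟨a2,b2⟩:=h2; obtain ⟨a3,b3⟩:=h3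
  subst h12 h13 h23
  refine ⟨⟨fun h => by linarith, fun h => by linarith⟩, fun h => ⟨?_, ?_⟩⟩
  · have e1 : x₁ + x₂ - 1 + (x₁ + x₃ - 1) - x₁ = x₁ + x₂ + x₃ - 2 := by ring
    have e2 : x₁ + x₂ - 1 + (x₂ + x₃ - 1) - x₂ = x₁ + x₂ + x₃ - 2 := by ring
    have e3 : x₁ + x₃ - 1 + (x₂ + x₃ - 1) - x₃ = x₁ + x₂ + x₃ - 2 := by ring
    rw [e1, e2, e3, max_self, max_self]
    exact max_eq_right (by linarith)
  · have e : 1 - x₁ - x₂ - x₃ + (x₁ + x₂ - 1) + (x₁ + x₃ - 1) + (x₂ + x₃ - 1) = x₁ + x₂ + x₃ - 2 := by ring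
    rw [e, min_eq_right (show x₁ + x₂ + x₃ - 2 ≤ x₂ + x₃ - 1 by linarith),
        min_eq_right (show x₁ + x₂ + x₃ - 2 ≤ x₁ + x₃ - 1 by linarith),
        min_eq_right (show x₁ + x₂ + x₃ - 2 ≤ x₁ + x₂ - 1 by linarith)]
end

section
/- Let x₁, x₂, x₃ ∈ [0,1] with x₁ + x₂ + x₃ − 2 > 0, and set x₁₂ = max(x₁ + x₂ − 1, 0), x₁₃ = max(x₁ + x₃ − 1, 0), x₂₃ = max(x₂ + x₃ − 1, 0), x₁₂₃ = max(x₁ + x₂ + x₃ − 2, 0). Then x_{ij} = x_i + x_j − 1 > 0 for each pair i ≠ j, and max(0, x₁₂ + x₁₃ − x₁, x₁₂ + x₂₃ − x₂, x₁₃ + x₂₃ − x₃) ≤ x₁₂₃ ≤ min(x₁₂, x₁₃, x₂₃, 1 − x₁ − x₂ − x₃ + x₁₂ + x₁₃ + x₂₃), with both the lower and the upper bound equal to x₁ + x₂ + x₃ − 2. -/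
theorem lukasiewicz_tnorm_assessment_coherent_of_pos (x₁ x₂ x₃ : ℝ)
    (h1 : x₁ ∈ Set.Icc (0 : ℝ) 1) (h2 : x₂ ∈ Set.Icc (0 : ℝ) 1)
    (h3 : x₃ ∈ Set.Icc (0 : ℝ) 1)
    (hpos : x₁ + x₂ + x₃ - 2 > 0)
    (x₁₂ x₁₃ x₂₃ x₁₂₃ : ℝ)
    (h12 : x₁₂ = max (x₁ + x₂ - 1) 0) (h13 : x₁₃ = max (x₁ + x₃ - 1) 0)
    (h23 : x₂₃ = max (x₂ + x₃ - 1) 0) (h123 : x₁₂₃ = max (x₁ + x₂ + x₃ - 2) 0) :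
    (x₁₂ = x₁ + x₂ - 1 ∧ 0 < x₁₂) ∧
    (x₁₃ = x₁ + x₃ - 1 ∧ 0 < x₁₃) ∧
    (x₂₃ = x₂ + x₃ - 1 ∧ 0 < x₂₃) ∧
    (max 0 (max (x₁₂ + x₁₃ - x₁) (max (x₁₂ + x₂₃ - x₂) (x₁₃ + x₂₃ - x₃))) ≤ x₁₂₃ ∧
      x₁₂₃ ≤ min x₁₂ (min x₁₃ (min x₂₃ (1 - x₁ - x₂ - x₃ + x₁₂ + x₁₃ + x₂₃)))) ∧
    max 0 (max (x₁₂ + x₁₃ - x₁) (max (x₁₂ + x₂₃ - x₂) (x₁₃ + x₂₃ - x₃))) =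
      x₁ + x₂ + x₃ - 2 ∧
    min x₁₂ (min x₁₃ (min x₂₃ (1 - x₁ - x₂ - x₃ + x₁₂ + x₁₃ + x₂₃))) =
      x₁ + x₂ + x₃ - 2 := by
  obtain ⟨h10, h11⟩ := h1
  obtain ⟨h20, h21⟩ := h2
  obtain ⟨h30, h31⟩ := h3
  have e12 : x₁₂ = x₁ + x₂ - 1 := by rw [h12, max_eq_left]; linarith
  have e13 : x₁₃ = x₁ + x₃ - 1 := by rw [h13, max_eq_left]; linarith
  have e23 : x₂₃ = x₂ + x₃ - 1 := by rw [h23, max_eq_left]; linarith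
  have e123 : x₁₂₃ = x₁ + x₂ + x₃ - 2 := by rw [h123, max_eq_left]; linarith
  subst e12 e13 e23 e123
  refine ⟨⟨rfl, by linarith⟩, ⟨rfl, by linarith⟩, ⟨rfl, by linarith⟩, ?_, ?_, ?_⟩
  · constructor
    · apply max_le (by linarith)
      apply max_le (by linarith)
      apply max_le (by linarith) (by linarith)
    · refine le_min (by linarith) (le_min (by linarith) (le_min (by linarith) (by linarith)))
  · rw [show x₁ + x₂ - 1 + (x₁ + x₃ - 1) - x₁ = x₁ + x₂ + x₃ - 2 by ring,
      show x₁ + x₂ - 1 + (x₂ + x₃ - 1) - x₂ = x₁ + x₂ + x₃ - 2 by ring,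
      show x₁ + x₃ - 1 + (x₂ + x₃ - 1) - x₃ = x₁ + x₂ + x₃ - 2 by ring,
      max_self, max_self, max_eq_right hpos.le]
  · rw [show 1 - x₁ - x₂ - x₃ + (x₁ + x₂ - 1) + (x₁ + x₃ - 1) + (x₂ + x₃ - 1) = x₁ + x₂ + x₃ - 2 by ring,
      min_eq_right (show x₁ + x₂ + x₃ - 2 ≤ x₂ + x₃ - 1 by linarith),
      min_eq_right (show x₁ + x₂ + x₃ - 2 ≤ x₁ + x₃ - 1 by linarith),
      min_eq_right (show x₁ + x₂ + x₃ - 2 ≤ x₁ + x₂ - 1 by linarith)]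
end
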